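/- Let H be a nonempty finite type, and let p, p⁺ : H → ℝ be strictly positive functions (the complete-data likelihoods p(ξ, η | Θ) and p(ξ, η | Θ⁺) as functions of the latent variable η ∈ H). Define the log-likelihoods L := Real.log (∑_{η} p η) and L⁺ := Real.log (∑_{η} p⁺ η), the posterior q η := p η / ∑_{η'} p η', and the EM auxiliary values J(p') := ∑_{η} q η * Real.log (p' η) for p' ∈ {p, p⁺}. Then L⁺ − L ≥ J(p⁺) − J(p). In particular, if J(p⁺) ≥ J(p) then L⁺ ≥ L: any update that does not decrease the auxiliary function does not decrease the observed-data log-likelihood. -/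
import Mathlib


/-- The monotonic-improvement guarantee underlying PRISM's EM algorithm: the change
in observed-data log-likelihood is bounded below by the change in the EM auxiliary
function, so any update that does not decrease the auxiliary function does not
decrease the observed-data log-likelihood. -/
theorem prism_em_monotone_improvement
    (H : Type*) [Fintype H] [Nonempty H]
    (p pPlus : H → ℝ) (hp : ∀ η, 0 < p η) (hpPlus : ∀ η, 0 < pPlus η)
    (L LPlus : ℝ)
    (hL : L = Real.log (∑ η : H, p η))
    (hLPlus : LPlus = Real.log (∑ η : H, pPlus η))
    (q : H → ℝ) (hq : ∀ η, q η = p η / ∑ η' : H, p η')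
    (J : (H → ℝ) → ℝ)
    (hJ : ∀ p' : H → ℝ, J p' = ∑ η : H, q η * Real.log (p' η)) :
    LPlus - L ≥ J pPlus - J p ∧ (J pPlus ≥ J p → LPlus ≥ L) := by
  have hS : (0 : ℝ) < ∑ η' : H, p η' :=
    Finset.sum_pos (fun η _ => hp η) Finset.univ_nonempty
  have hS' : (0 : ℝ) < ∑ η' : H, pPlus η' :=
    Finset.sum_pos (fun η _ => hpPlus η) Finset.univ_nonempty
  have hq0 : ∀ η ∈ Finset.univ (α := H), 0 ≤ q η := by
    intro η _; rw [hq]; exact le_of_lt (div_pos (hp η) hS)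
  have hq1 : ∑ η : H, q η = 1 := by
    simp only [hq, ← Finset.sum_div]
    exact div_self hS.ne'
  have key : ∑ η : H, q η • Real.log (pPlus η / p η)
      ≤ Real.log (∑ η : H, q η • (pPlus η / p η)) := by
    apply (strictConcaveOn_log_Ioi.concaveOn).le_map_sum hq0 hq1
    intro η _
    exact div_pos (hpPlus η) (hp η)
  have hsum : ∑ η : H, q η • (pPlus η / p η) = (∑ η : H, pPlus η) / (∑ η' : H, p η') := by
    rw [Finset.sum_div]
    refine Finset.sum_congr rfl fun η _ => ?_
    rw [hq, smul_eq_mul, div_mul_div_comm, mul_comm (p η) (pPlus η),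
      mul_div_mul_right _ _ (hp η).ne']
  have hmain : LPlus - L ≥ J pPlus - J p := by
    rw [hL, hLPlus, hJ, hJ, ← Finset.sum_sub_distrib,
      ← Real.log_div hS'.ne' hS.ne', ← hsum]
    calc ∑ η : H, (q η * Real.log (pPlus η) - q η * Real.log (p η))
        = ∑ η : H, q η • Real.log (pPlus η / p η) := by
          refine Finset.sum_congr rfl fun η _ => ?_
          rw [Real.log_div (hpPlus η).ne' (hp η).ne', smul_eq_mul, mul_sub]
      _ ≤ Real.log (∑ η : H, q η • (pPlus η / p η)) := key
  exact ⟨hmain, fun h => by linarith⟩
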